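/- arXiv:1907.11605 — 5 statements merged into one kernel-verified Lean document; each statement's English description precedes it below -/
import Mathlib

section
/- Let X_1, X_2, … be i.i.d. real random variables with mean μ such that X_k − μ is 1-sub-Gaussian, and let μ̂_w = (1/w)·Σ_{k=1}^w X_k. Then for every Δ with 0 < Δ ≤ 1, both Σ_{w=1}^∞ P( μ̂_w − μ > Δ − √(4·log w / w) ) ≤ (36/Δ²)·log(17/Δ) and Σ_{w=1}^∞ P( μ̂_w − μ < √(4·log w / w) − Δ ) ≤ (36/Δ²)·log(17/Δ). -/
open MeasureTheory ProbabilityTheory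
open scoped ENNReal

/-!
Once the sample size `t` exceeds `x = 18 (log (18 / Δ²) - 1) / Δ²`, the inequality
`log t ≤ a t - 1 - log a` with `a = Δ² / 18` gives `√(4 log t / t) ≤ 2Δ/3`, so the event forces
the sample mean to deviate by more than `Δ/3` and Hoeffding's inequality bounds its probability
by `exp (-t Δ² / 18)`. Bounding the first `⌊x⌋` terms by `1` and summing the geometric tail
gives `x + 18 / Δ² = 18 log (18 / Δ²) / Δ² ≤ (36 / Δ²) log (17 / Δ)`.
The lower tail is the upper tail of the negated variables.
-/

lemma Real.log_le_mul_sub_one_sub_log {a t : ℝ} (ha : 0 < a) (ht : 0 < t) :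
    Real.log t ≤ a * t - 1 - Real.log a := by
  have := Real.log_le_sub_one_of_pos (mul_pos ha ht)
  rw [Real.log_mul ha.ne' ht.ne'] at this
  linarith

lemma sqrt_four_log_div_le {Δ t : ℝ} (hΔ : 0 < Δ) (ht : 0 < t)
    (hthr : 18 * (Real.log (18 / Δ ^ 2) - 1) / Δ ^ 2 ≤ t) :
    √(4 * Real.log t / t) ≤ 2 / 3 * Δ := by
  have hlog := Real.log_le_mul_sub_one_sub_log (a := Δ ^ 2 / 18) (by positivity) ht
  rw [show Real.log (Δ ^ 2 / 18) = -Real.log (18 / Δ ^ 2) by rw [← Real.log_inv, inv_div]]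
    at hlog
  rw [div_le_iff₀ (by positivity)] at hthr
  rw [Real.sqrt_le_left (by positivity), div_le_iff₀ ht]
  linarith

lemma ENNReal.tsum_le_natCast_add_tsum {p g : ℕ → ℝ≥0∞} (N : ℕ) (hp : ∀ w < N, p w ≤ 1)
    (hpg : ∀ w, N ≤ w → p w ≤ g w) : ∑' w, p w ≤ N + ∑' w, g w := by
  rw [← ENNReal.summable.sum_add_tsum_nat_add' (k := N)]
  refine add_le_add ?_ ?_
  · simpa using Finset.sum_le_card_nsmul _ _ _ fun w hw => hp w (Finset.mem_range.1 hw)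
  · calc ∑' w, p (w + N) ≤ ∑' w, g (w + N) := ENNReal.tsum_le_tsum fun w => hpg _ le_add_self
      _ ≤ ∑' w, g w := ENNReal.tsum_comp_le_tsum_of_injective (add_left_injective N) g

lemma tsum_ofReal_exp_neg_succ_mul_le {q : ℝ} (hq : 0 < q) :
    ∑' w : ℕ, ENNReal.ofReal (Real.exp (-(((w : ℝ) + 1) * q))) ≤ ENNReal.ofReal q⁻¹ := by
  set r := Real.exp (-q)
  have hr0 : 0 ≤ r := (Real.exp_pos _).le
  have hr1 : r < 1 := Real.exp_lt_one_iff.2 (neg_lt_zero.2 hq)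
  have hterm : ∀ w : ℕ, Real.exp (-(((w : ℝ) + 1) * q)) = r * r ^ w := by
    intro w
    rw [← Real.exp_nat_mul, ← Real.exp_add]
    ring_nf
  simp_rw [hterm]
  rw [← ENNReal.ofReal_tsum_of_nonneg (fun w => by positivity)
    ((summable_geometric_of_lt_one hr0 hr1).mul_left r), tsum_mul_left,
    tsum_geometric_of_lt_one hr0 hr1]
  refine ENNReal.ofReal_le_ofReal ?_
  rw [mul_inv_le_iff₀ (sub_pos.2 hr1), le_inv_mul_iff₀ hq]
  -- `r * (1 + q) ≤ r * exp q = 1`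
  have hrq : r * Real.exp q = 1 := by rw [← Real.exp_add]; simp
  nlinarith [mul_le_mul_of_nonneg_left (Real.add_one_le_exp q) hr0]

section SampleMean

variable {Ω : Type*}

noncomputable def sampleMean (X : ℕ → Ω → ℝ) (n : ℕ) (ω : Ω) : ℝ :=
  (∑ k ∈ Finset.range n, X k ω) / n

lemma sampleMean_sub_const (X : ℕ → Ω → ℝ) (c : ℝ) {n : ℕ} (hn : n ≠ 0) (ω : Ω) :
    sampleMean (fun k ω => X k ω - c) n ω = sampleMean X n ω - c := by
  have hn' : (n : ℝ) ≠ 0 := Nat.cast_ne_zero.2 hn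
  simp only [sampleMean, Finset.sum_sub_distrib, Finset.sum_const, Finset.card_range,
    nsmul_eq_mul]
  field_simp

lemma sampleMean_neg (X : ℕ → Ω → ℝ) (n : ℕ) (ω : Ω) :
    sampleMean (fun k => -X k) n ω = -sampleMean X n ω := by
  simp only [sampleMean, Pi.neg_apply, Finset.sum_neg_distrib, neg_div]

variable [MeasurableSpace Ω] {P : Measure Ω} {Y : ℕ → Ω → ℝ}

lemma measure_sampleMean_gt_le [IsFiniteMeasure P]
    (hindep : iIndepFun Y P) (hsubg : ∀ k, HasSubgaussianMGF (Y k) 1 P)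
    {n : ℕ} (hn : 0 < n) {ε : ℝ} (hε : 0 ≤ ε) :
    P {ω | ε < sampleMean Y n ω} ≤ ENNReal.ofReal (Real.exp (-(n * ε ^ 2 / 2))) := by
  have hn' : (0 : ℝ) < n := Nat.cast_pos.2 hn
  have hsub : {ω | ε < sampleMean Y n ω} ⊆ {ω | n * ε ≤ ∑ k ∈ Finset.range n, Y k ω} :=
    fun ω hω => (le_div_iff₀' hn').1 (le_of_lt hω)
  have hoeffding := HasSubgaussianMGF.measure_sum_range_ge_le_of_iIndepFun (n := n) hindep
    (fun k _ => hsubg k) (mul_nonneg hn'.le hε)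
  calc P {ω | ε < sampleMean Y n ω} ≤ P {ω | n * ε ≤ ∑ k ∈ Finset.range n, Y k ω} :=
        measure_mono hsub
    _ = ENNReal.ofReal (P.real {ω | n * ε ≤ ∑ k ∈ Finset.range n, Y k ω}) :=
        (ofReal_measureReal (measure_ne_top _ _)).symm
    _ ≤ ENNReal.ofReal (Real.exp (-(n * ε ^ 2 / 2))) := by
        refine ENNReal.ofReal_le_ofReal (hoeffding.trans_eq ?_)
        rw [NNReal.coe_one]
        congr 1
        field_simp

lemma tsum_measure_sub_sqrt_log_lt_sampleMean_le [IsProbabilityMeasure P]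
    (hindep : iIndepFun Y P) (hsubg : ∀ k, HasSubgaussianMGF (Y k) 1 P)
    {Δ : ℝ} (hΔ0 : 0 < Δ) (hΔ1 : Δ ≤ 1) :
    ∑' w : ℕ, P {ω | Δ - √(4 * Real.log ((w : ℝ) + 1) / ((w : ℝ) + 1)) < sampleMean Y (w + 1) ω}
      ≤ ENNReal.ofReal (36 / Δ ^ 2 * Real.log (17 / Δ)) := by
  set x := 18 * (Real.log (18 / Δ ^ 2) - 1) / Δ ^ 2 with hx_def
  have hx : 0 ≤ x := by
    have h18 : 18 ≤ 18 / Δ ^ 2 := le_div_self (by norm_num) (by positivity)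
      (pow_le_one₀ hΔ0.le hΔ1)
    have hlog : 1 ≤ Real.log (18 / Δ ^ 2) := by
      rw [Real.le_log_iff_exp_le (by positivity)]
      linarith [Real.exp_one_lt_d9]
    have : 0 ≤ Real.log (18 / Δ ^ 2) - 1 := by linarith
    positivity
  have hterm : ∀ w, ⌊x⌋₊ ≤ w →
      P {ω | Δ - √(4 * Real.log ((w : ℝ) + 1) / ((w : ℝ) + 1)) < sampleMean Y (w + 1) ω}
        ≤ ENNReal.ofReal (Real.exp (-(((w : ℝ) + 1) * (Δ ^ 2 / 18)))) := by
    intro w hw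
    have hxw : x ≤ (w : ℝ) + 1 := by
      have := Nat.lt_floor_add_one x
      have : (⌊x⌋₊ : ℝ) ≤ w := by exact_mod_cast hw
      linarith
    have hsqrt := sqrt_four_log_div_le hΔ0 (by positivity) hxw
    calc _ ≤ P {ω | Δ / 3 < sampleMean Y (w + 1) ω} :=
          measure_mono fun ω (hω : _ < sampleMean Y (w + 1) ω) =>
            (by linarith : Δ / 3 < sampleMean Y (w + 1) ω)
      _ ≤ ENNReal.ofReal (Real.exp (-((w + 1 : ℕ) * (Δ / 3) ^ 2 / 2))) :=
          measure_sampleMean_gt_le hindep hsubg w.succ_pos (by positivity)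
      _ = _ := by push_cast; ring_nf
  have hlog : Real.log (18 / Δ ^ 2) ≤ 2 * Real.log (17 / Δ) :=
    calc Real.log (18 / Δ ^ 2) ≤ Real.log ((17 / Δ) ^ 2) :=
          Real.log_le_log (by positivity) (by rw [div_pow]; gcongr; norm_num)
      _ = 2 * Real.log (17 / Δ) := by rw [Real.log_pow]; norm_num
  calc _ ≤ ⌊x⌋₊ + ∑' w : ℕ, ENNReal.ofReal (Real.exp (-(((w : ℝ) + 1) * (Δ ^ 2 / 18)))) :=
        ENNReal.tsum_le_natCast_add_tsum _ (fun _ _ => prob_le_one) hterm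
    _ ≤ ENNReal.ofReal x + ENNReal.ofReal (Δ ^ 2 / 18)⁻¹ := by
        refine add_le_add ?_ (tsum_ofReal_exp_neg_succ_mul_le (by positivity))
        rw [← ENNReal.ofReal_natCast]
        exact ENNReal.ofReal_le_ofReal (Nat.floor_le hx)
    _ = ENNReal.ofReal (18 / Δ ^ 2 * Real.log (18 / Δ ^ 2)) := by
        rw [← ENNReal.ofReal_add hx (by positivity), hx_def]
        congr 1
        field_simp
        ring
    _ ≤ ENNReal.ofReal (36 / Δ ^ 2 * Real.log (17 / Δ)) := by
        refine ENNReal.ofReal_le_ofReal ?_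
        calc 18 / Δ ^ 2 * Real.log (18 / Δ ^ 2) ≤ 18 / Δ ^ 2 * (2 * Real.log (17 / Δ)) := by
              gcongr
          _ = _ := by ring

end SampleMean

theorem tail_sum_shrinking_window_le_general
    {Ω : Type*} [MeasurableSpace Ω] (P : Measure Ω) [IsProbabilityMeasure P]
    (X : ℕ → Ω → ℝ) (μ : ℝ)
    (hindep : iIndepFun X P)
    (hsubg : ∀ k (l : ℝ),
      Integrable (fun ω => Real.exp (l * (X k ω - μ))) P ∧
      ∫ ω, Real.exp (l * (X k ω - μ)) ∂P ≤ Real.exp (l ^ 2 / 2))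
    (Δ : ℝ) (hΔ0 : 0 < Δ) (hΔ1 : Δ ≤ 1) :
    (∑' w : ℕ, P {ω | (∑ k ∈ Finset.range (w + 1), X k ω) / (w + 1) - μ
          > Δ - Real.sqrt (4 * Real.log (w + 1) / (w + 1))})
        ≤ ENNReal.ofReal (36 / Δ ^ 2 * Real.log (17 / Δ)) ∧
    (∑' w : ℕ, P {ω | (∑ k ∈ Finset.range (w + 1), X k ω) / (w + 1) - μ
          < Real.sqrt (4 * Real.log (w + 1) / (w + 1)) - Δ})
        ≤ ENNReal.ofReal (36 / Δ ^ 2 * Real.log (17 / Δ)) := by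
  set Y : ℕ → Ω → ℝ := fun k ω => X k ω - μ
  have hY : ∀ k, HasSubgaussianMGF (Y k) 1 P := fun k =>
    ⟨fun t => (hsubg k t).1, fun t => by simpa [mgf, Y] using (hsubg k t).2⟩
  have hYindep : iIndepFun Y P := hindep.comp (fun _ x => x - μ) fun _ => measurable_sub_const μ
  have hcentered : ∀ (w : ℕ) ω,
      (∑ k ∈ Finset.range (w + 1), X k ω) / (w + 1) - μ = sampleMean Y (w + 1) ω := by
    intro w ω
    rw [sampleMean_sub_const X μ w.succ_ne_zero, sampleMean, Nat.cast_succ]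
  have hupper := tsum_measure_sub_sqrt_log_lt_sampleMean_le hYindep hY hΔ0 hΔ1
  have hlower := tsum_measure_sub_sqrt_log_lt_sampleMean_le (Y := fun k => -Y k)
    (hYindep.comp (fun _ x => -x) fun _ => measurable_neg) (fun k => (hY k).neg) hΔ0 hΔ1
  simp only [sampleMean_neg, ← hcentered, neg_sub] at hlower
  refine ⟨by simpa only [gt_iff_lt, hcentered] using hupper, ?_⟩
  simpa only [sub_lt_sub_iff, add_comm Δ, add_comm μ] using hlower

/-- **Tail-sum bounds for shrinking-window deviations of sample means
(Fact from the proof of Theorem 9 of Garivier et al.).**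
If `X 0, X 1, …` are i.i.d. with mean `μ` and `1`-sub-Gaussian centered increments, and
`μ̂_w` denotes the sample mean of the first `w` observations, then for every `0 < Δ ≤ 1`,
`∑_{w ≥ 1} P(μ̂_w - μ > Δ - √(4 log w / w)) ≤ (36/Δ²) log(17/Δ)` and
`∑_{w ≥ 1} P(μ̂_w - μ < √(4 log w / w) - Δ) ≤ (36/Δ²) log(17/Δ)`.
(The sums below run over `w : ℕ`, with `w + 1` playing the role of the sample size `w ≥ 1`.) -/
theorem tail_sum_shrinking_window_le
    {Ω : Type*} [MeasurableSpace Ω] (P : Measure Ω) [IsProbabilityMeasure P]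
    (X : ℕ → Ω → ℝ) (μ : ℝ)
    (hmeas : ∀ k, Measurable (X k))
    (hindep : iIndepFun X P)
    (hident : ∀ k l, IdentDistrib (X k) (X l) P P)
    (hmean : ∀ k, ∫ ω, X k ω ∂P = μ)
    (hsubg : ∀ k (l : ℝ),
      Integrable (fun ω => Real.exp (l * (X k ω - μ))) P ∧
      ∫ ω, Real.exp (l * (X k ω - μ)) ∂P ≤ Real.exp (l ^ 2 / 2))
    (Δ : ℝ) (hΔ0 : 0 < Δ) (hΔ1 : Δ ≤ 1) :
    (∑' w : ℕ, P {ω | (∑ k ∈ Finset.range (w + 1), X k ω) / (w + 1) - μ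
          > Δ - Real.sqrt (4 * Real.log (w + 1) / (w + 1))})
        ≤ ENNReal.ofReal (36 / Δ ^ 2 * Real.log (17 / Δ)) ∧
    (∑' w : ℕ, P {ω | (∑ k ∈ Finset.range (w + 1), X k ω) / (w + 1) - μ
          < Real.sqrt (4 * Real.log (w + 1) / (w + 1)) - Δ})
        ≤ ENNReal.ofReal (36 / Δ ^ 2 * Real.log (17 / Δ)) :=
  tail_sum_shrinking_window_le_general P X μ hindep hsubg Δ hΔ0 hΔ1
end

section
/- Let X_1, X_2, … be i.i.d. real random variables with mean μ such that X_k − μ is 1-sub-Gaussian, and let μ̂_n = (1/n)·Σ_{k=1}^n X_k. Then for any real constant c ≥ 1 and any δ with 0 < δ < c, with probability at least 1 − δ/c, simultaneously for every integer n ≥ 1: |μ̂_n − μ| ≤ √( ((1+n)/n²)·(1 + 2·log( c·√(1+n) / δ )) ). -/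
/-!
For fixed `t`, `exp (t Sₙ - n t² / 2)` with `Sₙ = ∑_{k<n} (X k - μ)` is a nonnegative
supermartingale for the filtration of strictly past observations, because the next increment is
independent of the past and `1`-sub-Gaussian. Mixing over `t ∼ N(0, 1)` preserves this and gives
the closed form `exp (Sₙ² / (2 (n + 1))) / √(n + 1)`, which starts at `1`. The deviation bound
fails at time `n` exactly when this mixture exceeds `√e · c / δ ≥ c / δ`, and by Ville's
inequality the mixture ever reaches `c / δ` with probability at most `δ / c`.
-/

open MeasureTheory ProbabilityTheory Real
open scoped ENNReal

section Ville

variable {Ω : Type*} {m : MeasurableSpace Ω} {P : Measure Ω}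

lemma mul_measure_inter_add_setLIntegral_le (s : Set Ω) {g : Ω → ℝ≥0∞} (hg : Measurable g)
    (ε : ℝ≥0∞) :
    ε * P (s ∩ {ω | ε ≤ g ω}) + ∫⁻ ω in s ∩ {ω | g ω < ε}, g ω ∂P ≤ ∫⁻ ω in s, g ω ∂P := by
  have hsplit := lintegral_inter_add_sdiff (μ := P) g s
    (measurableSet_le measurable_const hg : MeasurableSet {ω | ε ≤ g ω})
  have hdiff : s \ {ω | ε ≤ g ω} = s ∩ {ω | g ω < ε} := by ext; simp
  rw [← hsplit, hdiff]
  gcongr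
  rw [← setLIntegral_const]
  exact setLIntegral_mono hg fun ω hω => hω.2

variable {ℱ : Filtration ℕ m} {f : ℕ → Ω → ℝ≥0∞}

/-- Ville's maximal inequality. -/
theorem mul_measure_exists_le_le_lintegral (hadapted : ∀ n, Measurable[ℱ n] (f n))
    (hsuper : ∀ n s, MeasurableSet[ℱ n] s → ∫⁻ ω in s, f (n + 1) ω ∂P ≤ ∫⁻ ω in s, f n ω ∂P)
    (ε : ℝ≥0∞) :
    ε * P {ω | ∃ n, ε ≤ f n ω} ≤ ∫⁻ ω, f 0 ω ∂P := by
  set below : ℕ → Set Ω := fun N => {ω | ∀ n < N, f n ω < ε}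
  have below_mem : ∀ N, MeasurableSet[ℱ N] (below (N + 1)) := fun N => by
    simp only [below, Nat.lt_succ_iff, Set.ofPred_forall]
    exact .iInter fun n => .iInter fun hn =>
      measurableSet_lt ((hadapted n).mono (ℱ.mono hn) le_rfl) measurable_const
  have below_succ : ∀ N, below (N + 1) = below N ∩ {ω | f N ω < ε} := fun N => by
    ext ω; exact Nat.forall_lt_succ_right
  have crossed_add_below_le :
      ∀ N, ε * P (below N)ᶜ + ∫⁻ ω in below N, f N ω ∂P ≤ ∫⁻ ω, f 0 ω ∂P := by
    intro N
    induction N with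
    | zero => simp [below]
    | succ N ih =>
      have hcompl : (below (N + 1))ᶜ ⊆ (below N)ᶜ ∪ (below N ∩ {ω | ε ≤ f N ω}) := by
        intro ω
        simp only [below_succ, Set.mem_compl_iff, Set.mem_inter_iff, Set.mem_ofPred_eq, not_and,
          not_lt, Set.mem_union]
        tauto
      calc ε * P (below (N + 1))ᶜ + ∫⁻ ω in below (N + 1), f (N + 1) ω ∂P
          ≤ ε * P (below N)ᶜ + (ε * P (below N ∩ {ω | ε ≤ f N ω})
              + ∫⁻ ω in below N ∩ {ω | f N ω < ε}, f N ω ∂P) := by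
            rw [← add_assoc, ← mul_add, ← below_succ]
            refine add_le_add ?_ (hsuper N _ (below_mem N))
            gcongr
            exact (measure_mono hcompl).trans (measure_union_le _ _)
        _ ≤ ε * P (below N)ᶜ + ∫⁻ ω in below N, f N ω ∂P := by
            gcongr
            exact mul_measure_inter_add_setLIntegral_le _
              ((hadapted N).mono (ℱ.le N) le_rfl) ε
        _ ≤ ∫⁻ ω, f 0 ω ∂P := ih
  have hunion : {ω | ∃ n, ε ≤ f n ω} = ⋃ N, (below N)ᶜ := by
    ext ω
    simp only [below, Set.mem_iUnion, Set.mem_compl_iff, Set.mem_ofPred_eq, not_forall, not_lt]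
    exact ⟨fun ⟨n, h⟩ => ⟨n + 1, n, n.lt_succ_self, h⟩, fun ⟨_, n, _, h⟩ => ⟨n, h⟩⟩
  have hmono : Monotone fun N => (below N)ᶜ := fun N M hNM ω => by
    simp only [below, Set.mem_compl_iff, Set.mem_ofPred_eq, not_forall, not_lt]
    exact fun ⟨n, hn, h⟩ => ⟨n, hn.trans_le hNM, h⟩
  rw [hunion, hmono.measure_iUnion, ENNReal.mul_iSup]
  exact iSup_le fun N => le_self_add.trans (crossed_add_below_le N)

end Ville

lemma lintegral_exp_mul_sub_mul_sq {a : ℝ} (ha : 0 < a) (s : ℝ) :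
    ∫⁻ x, ENNReal.ofReal (exp (s * x - a * x ^ 2 / 2))
      = ENNReal.ofReal (exp (s ^ 2 / (2 * a)) * √(2 * π / a)) := by
  have hsq : ∀ x, exp (s * x - a * x ^ 2 / 2)
      = exp (s ^ 2 / (2 * a)) * exp (-(a / 2) * (x - s / a) ^ 2) := fun x => by
    rw [← exp_add]; congr 1; field_simp; ring
  simp_rw [hsq, ENNReal.ofReal_mul (exp_pos _).le]
  rw [lintegral_const_mul _ (by fun_prop),
    lintegral_sub_right_eq_self (fun x => ENNReal.ofReal (exp (-(a / 2) * x ^ 2))) (s / a),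
    ← ofReal_integral_eq_lintegral_ofReal (integrable_exp_neg_mul_sq (by positivity))
      (ae_of_all _ fun _ => (exp_pos _).le), integral_gaussian, div_div_eq_mul_div, mul_comm π]

lemma lintegral_exp_mul_sub_gaussianReal (s : ℝ) {τ : ℝ} (hτ : 0 ≤ τ) :
    ∫⁻ t, ENNReal.ofReal (exp (t * s - τ * t ^ 2 / 2)) ∂gaussianReal 0 1
      = ENNReal.ofReal (exp (s ^ 2 / (2 * (1 + τ))) / √(1 + τ)) := by
  have hdens : ∀ t, gaussianPDF 0 1 t * ENNReal.ofReal (exp (t * s - τ * t ^ 2 / 2))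
      = ENNReal.ofReal (√(2 * π))⁻¹ * ENNReal.ofReal (exp (s * t - (1 + τ) * t ^ 2 / 2)) := by
    intro t
    rw [gaussianPDF, gaussianPDFReal, ← ENNReal.ofReal_mul (by positivity),
      ← ENNReal.ofReal_mul (by positivity), mul_assoc, ← exp_add]
    congr 2
    · simp
    · congr 1; push_cast; ring
  rw [gaussianReal_of_var_ne_zero _ one_ne_zero,
    lintegral_withDensity_eq_lintegral_mul _ (measurable_gaussianPDF 0 1) (by fun_prop)]
  simp_rw [Pi.mul_apply, hdens]
  rw [lintegral_const_mul _ (by fun_prop), lintegral_exp_mul_sub_mul_sq (by positivity),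
    ← ENNReal.ofReal_mul (by positivity), sqrt_div' _ (by positivity)]
  congr 1
  field_simp

namespace ProbabilityTheory

variable {Ω : Type*} {m : MeasurableSpace Ω} {P : Measure Ω}

lemma HasSubgaussianMGF.lintegral_exp_mul_sub_le_one {Z : Ω → ℝ} (hZ : HasSubgaussianMGF Z 1 P)
    (t : ℝ) :
    ∫⁻ ω, ENNReal.ofReal (exp (t * Z ω - t ^ 2 / 2)) ∂P ≤ 1 := by
  have hsplit : (fun ω => exp (t * Z ω - t ^ 2 / 2))
      = fun ω => exp (t * Z ω) * exp (-(t ^ 2 / 2)) := by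
    ext ω; rw [sub_eq_add_neg, exp_add]
  have hint : Integrable (fun ω => exp (t * Z ω - t ^ 2 / 2)) P := by
    rw [hsplit]; exact (hZ.integrable_exp_mul t).mul_const _
  rw [← ofReal_integral_eq_lintegral_ofReal hint (ae_of_all _ fun _ => (exp_pos _).le),
    ← ENNReal.ofReal_one, hsplit, integral_mul_const]
  refine ENNReal.ofReal_le_ofReal ?_
  calc mgf Z P t * exp (-(t ^ 2 / 2)) ≤ exp (t ^ 2 / 2) * exp (-(t ^ 2 / 2)) := by
        gcongr
        simpa using hZ.mgf_le t
    _ = 1 := by rw [← exp_add, add_neg_cancel, exp_zero]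

end ProbabilityTheory

section ExpSupermartingale

variable {Ω : Type*} {m : MeasurableSpace Ω} {P : Measure Ω} {Y : ℕ → Ω → ℝ}

/-- Unlike `Filtration.natural`, the σ-algebra at time `n` does not contain `Y n`. -/
def pastFiltration (Y : ℕ → Ω → ℝ) (hY : ∀ k, Measurable (Y k)) : Filtration ℕ m where
  seq n := ⨆ k ∈ Set.Iio n, MeasurableSpace.comap (Y k) inferInstance
  mono' _ _ hnm := biSup_mono fun _ hk => lt_of_lt_of_le hk hnm
  le' _ := iSup₂_le fun k _ => (hY k).comap_le

lemma measurable_sum_range_pastFiltration (hY : ∀ k, Measurable (Y k)) (n : ℕ) :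
    Measurable[pastFiltration Y hY n] fun ω => ∑ k ∈ Finset.range n, Y k ω :=
  Finset.measurable_sum _ fun k hk =>
    (comap_measurable (Y k)).mono (le_iSup₂ (f := fun k (_ : k ∈ Set.Iio n) =>
      MeasurableSpace.comap (Y k) inferInstance) k (Finset.mem_range.mp hk)) le_rfl

lemma indep_pastFiltration_comap (hY : ∀ k, Measurable (Y k)) (hindep : iIndepFun Y P) (n : ℕ) :
    Indep (pastFiltration Y hY n) (MeasurableSpace.comap (Y n) inferInstance) P := by
  have := indep_iSup_of_disjoint (fun k => (hY k).comap_le)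
    ((iIndepFun_iff_iIndep _ _ _).1 hindep) (S := Set.Iio n) (T := {n}) (by simp)
  rwa [iSup_singleton] at this

noncomputable def expSupermartingale (Y : ℕ → Ω → ℝ) (t : ℝ) (n : ℕ) (ω : Ω) : ℝ≥0∞ :=
  ENNReal.ofReal (exp (t * ∑ k ∈ Finset.range n, Y k ω - n * t ^ 2 / 2))

lemma expSupermartingale_succ (t : ℝ) (n : ℕ) (ω : Ω) :
    expSupermartingale Y t (n + 1) ω
      = expSupermartingale Y t n ω * ENNReal.ofReal (exp (t * Y n ω - t ^ 2 / 2)) := by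
  rw [expSupermartingale, expSupermartingale, ← ENNReal.ofReal_mul (exp_pos _).le, ← exp_add,
    Finset.sum_range_succ]
  push_cast
  ring_nf

lemma measurable_expSupermartingale_uncurry (hY : ∀ k, Measurable (Y k)) (n : ℕ) :
    Measurable (Function.uncurry fun ω t => expSupermartingale Y t n ω) := by
  have := Finset.measurable_sum (Finset.range n) fun k _ => hY k
  unfold expSupermartingale
  fun_prop

lemma setLIntegral_expSupermartingale_succ_le (hY : ∀ k, Measurable (Y k))
    (hindep : iIndepFun Y P) (hsubg : ∀ k, HasSubgaussianMGF (Y k) 1 P) (t : ℝ) (n : ℕ)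
    {s : Set Ω} (hs : MeasurableSet[pastFiltration Y hY n] s) :
    ∫⁻ ω in s, expSupermartingale Y t (n + 1) ω ∂P ≤ ∫⁻ ω in s, expSupermartingale Y t n ω ∂P := by
  have hpast : Measurable[pastFiltration Y hY n] (s.indicator (expSupermartingale Y t n)) := by
    refine Measurable.indicator ?_ hs
    have := measurable_sum_range_pastFiltration hY n
    unfold expSupermartingale
    fun_prop
  have hincr : Measurable[MeasurableSpace.comap (Y n) inferInstance]
      fun ω => ENNReal.ofReal (exp (t * Y n ω - t ^ 2 / 2)) := by
    have := comap_measurable (m := (inferInstance : MeasurableSpace ℝ)) (Y n)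
    fun_prop
  calc ∫⁻ ω in s, expSupermartingale Y t (n + 1) ω ∂P
      = ∫⁻ ω, s.indicator (expSupermartingale Y t n) ω
          * ENNReal.ofReal (exp (t * Y n ω - t ^ 2 / 2)) ∂P := by
        rw [← lintegral_indicator ((pastFiltration Y hY).le n _ hs)]
        congr with ω
        by_cases hω : ω ∈ s <;> simp [hω, expSupermartingale_succ]
    _ = (∫⁻ ω in s, expSupermartingale Y t n ω ∂P)
          * ∫⁻ ω, ENNReal.ofReal (exp (t * Y n ω - t ^ 2 / 2)) ∂P := by
        rw [lintegral_mul_eq_lintegral_mul_lintegral_of_independent_measurableSpace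
          ((pastFiltration Y hY).le n) (hY n).comap_le (indep_pastFiltration_comap hY hindep n)
          hpast hincr, lintegral_indicator ((pastFiltration Y hY).le n _ hs)]
    _ ≤ ∫⁻ ω in s, expSupermartingale Y t n ω ∂P :=
        mul_le_of_le_one_right' ((hsubg n).lintegral_exp_mul_sub_le_one t)


noncomputable def gaussMixture (Y : ℕ → Ω → ℝ) (n : ℕ) (ω : Ω) : ℝ≥0∞ :=
  ∫⁻ t, expSupermartingale Y t n ω ∂gaussianReal 0 1

lemma gaussMixture_eq (n : ℕ) (ω : Ω) :
    gaussMixture Y n ω = ENNReal.ofReal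
      (exp ((∑ k ∈ Finset.range n, Y k ω) ^ 2 / (2 * (1 + n))) / √(1 + n)) :=
  lintegral_exp_mul_sub_gaussianReal _ n.cast_nonneg

lemma measurable_gaussMixture_pastFiltration (hY : ∀ k, Measurable (Y k)) (n : ℕ) :
    Measurable[pastFiltration Y hY n] (gaussMixture Y n) := by
  have := measurable_sum_range_pastFiltration hY n
  simp_rw [funext (gaussMixture_eq n)]
  fun_prop

lemma setLIntegral_gaussMixture_succ_le [SFinite P] (hY : ∀ k, Measurable (Y k))
    (hindep : iIndepFun Y P) (hsubg : ∀ k, HasSubgaussianMGF (Y k) 1 P) (n : ℕ)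
    {s : Set Ω} (hs : MeasurableSet[pastFiltration Y hY n] s) :
    ∫⁻ ω in s, gaussMixture Y (n + 1) ω ∂P ≤ ∫⁻ ω in s, gaussMixture Y n ω ∂P := by
  unfold gaussMixture
  rw [lintegral_lintegral_swap (measurable_expSupermartingale_uncurry hY _).aemeasurable,
    lintegral_lintegral_swap (measurable_expSupermartingale_uncurry hY _).aemeasurable]
  exact lintegral_mono fun t => setLIntegral_expSupermartingale_succ_le hY hindep hsubg t n hs

lemma measure_exists_le_gaussMixture_le [IsProbabilityMeasure P] (hY : ∀ k, Measurable (Y k))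
    (hindep : iIndepFun Y P) (hsubg : ∀ k, HasSubgaussianMGF (Y k) 1 P) {r : ℝ} (hr : 0 < r) :
    P {ω | ∃ n, ENNReal.ofReal r ≤ gaussMixture Y n ω} ≤ ENNReal.ofReal r⁻¹ := by
  have hville := mul_measure_exists_le_le_lintegral (ℱ := pastFiltration Y hY)
    (measurable_gaussMixture_pastFiltration hY)
    (fun n _ hs => setLIntegral_gaussMixture_succ_le hY hindep hsubg n hs) (ENNReal.ofReal r)
  have hstart : ∫⁻ ω, gaussMixture Y 0 ω ∂P = 1 := by simp [gaussMixture_eq]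
  rw [hstart, mul_comm] at hville
  rw [ENNReal.ofReal_inv_of_pos hr]
  exact ENNReal.le_inv_iff_mul_le.2 hville

end ExpSupermartingale

lemma le_exp_sq_div_sqrt_of_sqrt_lt_abs {c δ : ℝ} (hc : 0 < c) (hδ : 0 < δ) {n : ℕ} (hn : 1 ≤ n)
    (x : ℕ → ℝ) (μ : ℝ)
    (h : √((1 + n) / (n : ℝ) ^ 2 * (1 + 2 * log (c * √(1 + n) / δ)))
      < |(∑ k ∈ Finset.range n, x k) / n - μ|) :
    c / δ ≤ exp ((∑ k ∈ Finset.range n, (x k - μ)) ^ 2 / (2 * (1 + n))) / √(1 + n) := by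
  have hn0 : (0 : ℝ) < n := by exact_mod_cast hn
  have hmean : (∑ k ∈ Finset.range n, x k) / n - μ = (∑ k ∈ Finset.range n, (x k - μ)) / n := by
    rw [Finset.sum_sub_distrib, Finset.sum_const, Finset.card_range, nsmul_eq_mul]
    field_simp
  set S := ∑ k ∈ Finset.range n, (x k - μ)
  set L := log (c * √(1 + n) / δ)
  have hsq := lt_sq_of_sqrt_lt h
  rw [hmean, sq_abs, div_pow, div_mul_eq_mul_div,
    div_lt_div_iff_of_pos_right (by positivity)] at hsq
  have hL : L < S ^ 2 / (2 * (1 + n)) := by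
    rw [lt_div_iff₀ (by positivity)]
    nlinarith
  have hexp := exp_lt_exp.2 hL
  rw [exp_log (by positivity)] at hexp
  rw [le_div_iff₀ (by positivity), div_mul_eq_mul_div]
  exact hexp.le

theorem anytime_selfnormalized_concentration_general
    {Ω : Type*} [MeasurableSpace Ω] (P : Measure Ω) [IsProbabilityMeasure P]
    (X : ℕ → Ω → ℝ) (μ : ℝ)
    (hmeas : ∀ k, Measurable (X k))
    (hindep : iIndepFun X P)
    (hsubg : ∀ k (l : ℝ),
      Integrable (fun ω => Real.exp (l * (X k ω - μ))) P ∧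
      ∫ ω, Real.exp (l * (X k ω - μ)) ∂P ≤ Real.exp (l ^ 2 / 2))
    (c δ : ℝ) (hδ0 : 0 < δ) (hδc : δ < c) :
    ENNReal.ofReal (1 - δ / c)
      ≤ P {ω | ∀ n : ℕ, 1 ≤ n →
          |(∑ k ∈ Finset.range n, X k ω) / n - μ|
            ≤ Real.sqrt ((1 + n) / (n : ℝ) ^ 2
                * (1 + 2 * Real.log (c * Real.sqrt (1 + n) / δ)))} := by
  set good := {ω | ∀ n : ℕ, 1 ≤ n →
    |(∑ k ∈ Finset.range n, X k ω) / n - μ|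
      ≤ Real.sqrt ((1 + n) / (n : ℝ) ^ 2 * (1 + 2 * Real.log (c * Real.sqrt (1 + n) / δ)))}
  set Y : ℕ → Ω → ℝ := fun k ω => X k ω - μ
  have hc : 0 < c := hδ0.trans hδc
  have hY : ∀ k, Measurable (Y k) := fun k => (hmeas k).sub_const μ
  have hYindep : iIndepFun Y P := hindep.comp (fun _ x => x - μ) fun _ => measurable_id.sub_const μ
  have hYsubg : ∀ k, HasSubgaussianMGF (Y k) 1 P := fun k =>
    ⟨fun t => (hsubg k t).1, fun t => by simpa [mgf, Y] using (hsubg k t).2⟩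
  have hbad : goodᶜ ⊆ {ω | ∃ n, ENNReal.ofReal (c / δ) ≤ gaussMixture Y n ω} := by
    intro ω hω
    simp only [good, Set.mem_compl_iff, Set.mem_ofPred_eq, not_forall, not_le] at hω
    obtain ⟨n, hn, hlt⟩ := hω
    refine ⟨n, ?_⟩
    rw [gaussMixture_eq]
    exact ENNReal.ofReal_le_ofReal
      (le_exp_sq_div_sqrt_of_sqrt_lt_abs hc hδ0 hn (fun k => X k ω) μ hlt)
  have hPbad : P goodᶜ ≤ ENNReal.ofReal (δ / c) := by
    simpa only [inv_div] using (measure_mono hbad).trans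
      (measure_exists_le_gaussMixture_le hY hYindep hYsubg (div_pos hc hδ0))
  calc ENNReal.ofReal (1 - δ / c) = 1 - ENNReal.ofReal (δ / c) := by
        rw [ENNReal.ofReal_sub _ (div_pos hδ0 hc).le, ENNReal.ofReal_one]
    _ ≤ 1 - P goodᶜ := tsub_le_tsub_left hPbad 1
    _ ≤ P good := tsub_le_iff_right.2 <| by
        simpa only [measure_univ, Set.union_compl_self] using measure_union_le (μ := P) good goodᶜ

/-- **Anytime self-normalized concentration for i.i.d. 1-sub-Gaussian sequences
(Lemma 6 of Abbasi-Yadkori et al., i.i.d. specialization).**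
If `X 0, X 1, …` are i.i.d. with mean `μ` and `1`-sub-Gaussian centered increments, then for
any real `c ≥ 1` and any `0 < δ < c`, with probability at least `1 - δ/c`, simultaneously for
every sample size `n ≥ 1`,
`|μ̂_n - μ| ≤ √(((1+n)/n²)·(1 + 2 log(c·√(1+n)/δ)))`. -/
theorem anytime_selfnormalized_concentration
    {Ω : Type*} [MeasurableSpace Ω] (P : Measure Ω) [IsProbabilityMeasure P]
    (X : ℕ → Ω → ℝ) (μ : ℝ)
    (hmeas : ∀ k, Measurable (X k))
    (hindep : iIndepFun X P)
    (hident : ∀ k l, IdentDistrib (X k) (X l) P P)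
    (hmean : ∀ k, ∫ ω, X k ω ∂P = μ)
    (hsubg : ∀ k (l : ℝ),
      Integrable (fun ω => Real.exp (l * (X k ω - μ))) P ∧
      ∫ ω, Real.exp (l * (X k ω - μ)) ∂P ≤ Real.exp (l ^ 2 / 2))
    (c δ : ℝ) (hc : 1 ≤ c) (hδ0 : 0 < δ) (hδc : δ < c) :
    ENNReal.ofReal (1 - δ / c)
      ≤ P {ω | ∀ n : ℕ, 1 ≤ n →
          |(∑ k ∈ Finset.range n, X k ω) / n - μ|
            ≤ Real.sqrt ((1 + n) / (n : ℝ) ^ 2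
                * (1 + 2 * Real.log (c * Real.sqrt (1 + n) / δ)))} :=
  anytime_selfnormalized_concentration_general P X μ hmeas hindep hsubg c δ hδ0 hδc
end

section
/- Fix integers A ≥ 1, D ≥ 1 and a real ε > 0. Suppose that for each arm a ∈ 𝒜 = {1,…,A} and each objective i ∈ {1,…,D} we are given real numbers μ_a^i (true means), μ̂_a^i (estimates), and c_a ≥ 0, with u_a^i = μ̂_a^i + c_a and l_a^i = μ̂_a^i − c_a, such that μ_a^i ∈ [l_a^i, u_a^i] for every a and i. Define: arms a, b are linked in objective i if [l_a^i, u_a^i] ∩ [l_b^i, u_b^i] ≠ ∅, and chained in objective i within a set S ⊆ 𝒜 if some finite sequence of arms of S starts at a, ends at b, and has consecutive members linked in objective i. Set Â^0 = 𝒜; for i = 1,…,D−1 let â^i maximize u_a^i over a ∈ Â^{i−1} and Â^i = {a ∈ Â^{i−1} : a is chained to â^i in objective i within Â^{i−1}}; let â^D maximize u_a^D over a ∈ Â^{D−1}. If every arm b ∈ Â^1 satisfies c_b ≤ ε/2, and the arm â^D belongs to 𝒮_*^i for some objective i, then μ_*^i − μ_{â^D}^i ≤ u_{â^D}^i − l_{â^D}^i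 + ε·(A − 1). -/
open Finset
open scoped Classical

noncomputable section

namespace PFLexGap

/-- `x ≻_{lex,i} y` : `x` lexicographically dominates `y` in the first `i` objectives
(0-indexed: objectives `0,…,i`). -/
def LexDom {D : ℕ} (i : Fin D) (x y : Fin D → ℝ) : Prop :=
  ∃ j : Fin D, j ≤ i ∧ y j < x j ∧ ∀ k, k < j → x k = y k

/-- `𝒜_*^{i+1}` (paper indexing): arms not lexicographically dominated in the first
`i` (0-indexed) objectives. -/
def LexOptSet (A : ℕ) {D : ℕ} (μ : Fin A → Fin D → ℝ) (i : Fin D) : Finset (Fin A) :=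
  Finset.univ.filter fun a => ∀ a' : Fin A, ¬ LexDom i (μ a') (μ a)

/-- `𝒮_*^{i+1}` (paper indexing). -/
def SStar (A : ℕ) {D : ℕ} (μ : Fin A → Fin D → ℝ) (i : Fin D) : Finset (Fin A) :=
  if (i : ℕ) = 0 then Finset.univ \ LexOptSet A μ i
  else LexOptSet A μ ⟨(i : ℕ) - 1, lt_of_le_of_lt (Nat.sub_le _ _) i.2⟩ \ LexOptSet A μ i

/-- `a` is chained to `b` within `S` under the linked relation `L`: some finite sequence of
elements of `S` starts at `a`, ends at `b`, and has consecutive members `L`-linked. -/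
def Chained {α : Type*} (S : Finset α) (L : α → α → Prop) (a b : α) : Prop :=
  Relation.ReflTransGen (fun x y => x ∈ S ∧ y ∈ S ∧ L x y) a b

/-- Arms `a` and `b` are linked in objective `i`: `[μ̂_a^i - c_a, μ̂_a^i + c_a]`
and `[μ̂_b^i - c_b, μ̂_b^i + c_b]` intersect. -/
def Linked {A D : ℕ} (μhat : Fin A → Fin D → ℝ) (c : Fin A → ℝ) (i : Fin D)
    (a b : Fin A) : Prop :=
  μhat a i - c a ≤ μhat b i + c b ∧ μhat b i - c b ≤ μhat a i + c a

/-- From any `r`-chain we can extract a duplicate-free `r`-chain with the same endpoints. -/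
private lemma exists_nodup_chain_aux {α : Type*} {r : α → α → Prop} :
    ∀ (l : List α) (a : α), List.Chain r a l →
      ∃ m : List α, List.Chain r a m ∧
        (a :: m).getLast? = (a :: l).getLast? ∧ (a :: m).Nodup := by
  intro l
  induction l with
  | nil => exact fun a _ => ⟨[], List.Chain.nil, rfl, by simp⟩
  | cons x l' ih =>
    intro a h
    rw [List.Chain, List.chain_cons] at h
    obtain ⟨hax, hchain⟩ := h
    obtain ⟨m', hm'chain, hm'last, hm'nodup⟩ := ih x hchain
    by_cases hmem : a ∈ x :: m'
    · rcases List.mem_cons.mp hmem with heq | hmem'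
      · subst heq
        exact ⟨m', hm'chain, by rw [List.getLast?_cons_cons]; exact hm'last, hm'nodup⟩
      · obtain ⟨m₁, m₂, heq⟩ := List.append_of_mem hmem'
        subst heq
        have hsplit := (List.isChain_cons_split (a := x) (c := a)).mp hm'chain
        refine ⟨m₂, hsplit.2, ?_, ?_⟩
        · rw [List.getLast?_cons_cons]
          rw [← hm'last]
          have h1 : (x :: (m₁ ++ a :: m₂)) = (x :: m₁) ++ (a :: m₂) := by simp
          rw [h1, List.getLast?_append]
          obtain ⟨z, hz⟩ := Option.isSome_iff_exists.mp
            (List.getLast?_isSome.mpr (List.cons_ne_nil a m₂))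
          rw [hz]
          rfl
        · have hsl : List.Sublist (a :: m₂) (x :: (m₁ ++ a :: m₂)) :=
            List.Sublist.cons _ (List.sublist_append_right _ _)
          exact hsl.nodup hm'nodup
    · exact ⟨x :: m', List.chain_cons.mpr ⟨hax, hm'chain⟩,
        by rw [List.getLast?_cons_cons, List.getLast?_cons_cons]; exact hm'last,
        List.nodup_cons.mpr ⟨hmem, hm'nodup⟩⟩

private lemma rtg_exists_nodup_chain {α : Type*} {r : α → α → Prop} {a b : α}
    (h : Relation.ReflTransGen r a b) :
    ∃ l : List α, List.Chain r a l ∧ (a :: l).getLast? = some b ∧ (a :: l).Nodup := by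
  obtain ⟨l, hl, hlast⟩ := List.exists_isChain_cons_of_relationReflTransGen h
  obtain ⟨m, hm, hmlast, hmnodup⟩ := exists_nodup_chain_aux l a hl
  refine ⟨m, hm, ?_, hmnodup⟩
  rw [hmlast, List.getLast?_eq_getLast_of_ne_nil (List.cons_ne_nil _ _)]
  exact congrArg some hlast

private lemma chain_g_bound {α : Type*} {r : α → α → Prop} (g : α → ℝ) (ε : ℝ)
    (hr : ∀ x y, r x y → g y ≤ g x + ε) :
    ∀ (l : List α) (a b : α), List.Chain r a l → (a :: l).getLast? = some b →
      g b ≤ g a + ε * l.length := by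
  intro l
  induction l with
  | nil =>
    intro a b _ hlast
    simp only [List.getLast?_singleton, Option.some.injEq] at hlast
    subst hlast; simp
  | cons x l' ih =>
    intro a b h hlast
    rw [List.Chain, List.chain_cons] at h
    rw [List.getLast?_cons_cons] at hlast
    have h1 := ih x b h.2 hlast
    have h2 := hr a x h.1
    have hexp : ε * ((x :: l').length : ℝ) = ε * (l'.length : ℝ) + ε := by
      push_cast [List.length_cons]; ring
    rw [hexp]
    linarith

private lemma chain_mem_of_target {α : Type*} {r : α → α → Prop} {S : Finset α}
    (hr : ∀ x y, r x y → y ∈ S) :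
    ∀ (l : List α) (a : α), List.Chain r a l → ∀ x ∈ l, x ∈ S := by
  intro l
  induction l with
  | nil => intro a _ x hx; simp at hx
  | cons y l' ih =>
    intro a h x hx
    rw [List.Chain, List.chain_cons] at h
    rcases List.mem_cons.mp hx with h' | h'
    · subst h'; exact hr a x h.1
    · exact ih y h.2 x h'

/-- Along a chain inside `S` where each step increases `g` by at most `ε`, the total
increase is at most `ε * (|S| - 1)`. -/
private lemma chained_bound {α : Type*} [DecidableEq α] {S : Finset α} {r : α → α → Prop}
    (g : α → ℝ) (ε : ℝ) (hε : 0 ≤ ε)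
    (hr : ∀ x y, r x y → y ∈ S ∧ g y ≤ g x + ε)
    {a b : α} (ha : a ∈ S) (h : Relation.ReflTransGen r a b) :
    g b ≤ g a + ε * ((S.card : ℝ) - 1) := by
  obtain ⟨l, hc, hlast, hnd⟩ := rtg_exists_nodup_chain h
  have hmem : ∀ x ∈ (a :: l), x ∈ S := by
    intro x hx
    rcases List.mem_cons.mp hx with h' | h'
    · subst h'; exact ha
    · exact chain_mem_of_target (fun x y hxy => (hr x y hxy).1) l a hc x h'
  have hlen : (l.length : ℝ) ≤ (S.card : ℝ) - 1 := by
    have hsub : (a :: l).toFinset ⊆ S := fun x hx => hmem x (List.mem_toFinset.mp hx)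
    have hcard : (a :: l).toFinset.card = l.length + 1 := by
      rw [List.toFinset_card_of_nodup hnd]; simp
    have hle := Finset.card_le_card hsub
    rw [hcard] at hle
    have h' : ((l.length + 1 : ℕ) : ℝ) ≤ (S.card : ℝ) := by exact_mod_cast hle
    push_cast at h'
    linarith
  have hb := chain_g_bound g ε (fun x y hxy => (hr x y hxy).2) l a b hc hlast
  have := mul_le_mul_of_nonneg_left hlen hε
  linarith

private lemma lexOptSet_anti {A D : ℕ} (μ : Fin A → Fin D → ℝ) {i j : Fin D} (hij : i ≤ j) :
    LexOptSet A μ j ⊆ LexOptSet A μ i := by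
  intro a ha
  simp only [LexOptSet, Finset.mem_filter, Finset.mem_univ, true_and] at ha ⊢
  intro a' hdom
  obtain ⟨k, hk, h1, h2⟩ := hdom
  exact ha a' ⟨k, le_trans hk hij, h1, h2⟩

private lemma lexOptSet_agree {A D : ℕ} {μ : Fin A → Fin D → ℝ} {j : Fin D} {a b : Fin A}
    (ha : a ∈ LexOptSet A μ j) (hb : b ∈ LexOptSet A μ j) :
    ∀ n : ℕ, ∀ (hn : n < D), (⟨n, hn⟩ : Fin D) ≤ j → μ a ⟨n, hn⟩ = μ b ⟨n, hn⟩ := by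
  simp only [LexOptSet, Finset.mem_filter, Finset.mem_univ, true_and] at ha hb
  intro n
  induction n using Nat.strong_induction_on with
  | _ n ihn =>
    intro hn hnj
    by_contra hne
    have heqbelow : ∀ k : Fin D, k < (⟨n, hn⟩ : Fin D) → μ a k = μ b k := by
      intro k hk
      have hk' : (k : ℕ) < n := hk
      have := ihn (k : ℕ) hk' k.2 (le_trans (le_of_lt hk) hnj)
      simpa using this
    rcases lt_or_gt_of_ne hne with hlt | hlt
    · exact ha b ⟨⟨n, hn⟩, hnj, hlt, fun k hk => (heqbelow k hk).symm⟩
    · exact hb a ⟨⟨n, hn⟩, hnj, hlt, fun k hk => heqbelow k hk⟩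

/-- **Deterministic gap bound for PF-LEX (Lemma `gap-bound`).**
Suppose every true mean lies in the corresponding confidence interval, the sets
`Â^0 = 𝒜, Â^1, …, Â^{D-1}` and the optimistic arms `â^1, …, â^D` are built as in PF-LEX,
and every arm of `Â^1` has confidence radius at most `ε/2`.  If `â^D ∈ 𝒮_*^i` for some
objective `i`, then `μ_*^i - μ_{â^D}^i ≤ u_{â^D}^i - l_{â^D}^i + ε·(A-1)`. -/
theorem gap_bound (A D : ℕ) (hA : 0 < A) (hD : 0 < D) (ε : ℝ) (hε : 0 < ε)
    (μ μhat : Fin A → Fin D → ℝ) (c : Fin A → ℝ) (hc : ∀ a, 0 ≤ c a)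
    -- every true mean is inside its confidence interval
    (hcontain : ∀ (a : Fin A) (i : Fin D),
      μhat a i - c a ≤ μ a i ∧ μ a i ≤ μhat a i + c a)
    -- `astar` is a lexicographic optimal arm
    (astar : Fin A) (hstar : astar ∈ LexOptSet A μ ⟨D - 1, by omega⟩)
    -- the PF-LEX sets and optimistic arms
    (Ahat : ℕ → Finset (Fin A)) (ahat : ℕ → Fin A)
    (hA0 : Ahat 0 = Finset.univ)
    -- level 1 (`â^1` maximizes `u^1` over `Â^0`; `Â^1` is its chained component);
    -- this is the `i = 1` instance of the next hypothesis but is also required when `D = 1`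
    (hlvl1 : ahat 1 ∈ Ahat 0 ∧
      (∀ b ∈ Ahat 0, μhat b ⟨0, hD⟩ + c b ≤ μhat (ahat 1) ⟨0, hD⟩ + c (ahat 1)) ∧
      Ahat 1 = (Ahat 0).filter fun a =>
        Chained (Ahat 0) (Linked μhat c ⟨0, hD⟩) a (ahat 1))
    -- levels `1 ≤ l ≤ D-1`
    (hlvl : ∀ l : ℕ, 1 ≤ l → (hl : l ≤ D - 1) →
      ahat l ∈ Ahat (l - 1) ∧
      (∀ b ∈ Ahat (l - 1),
        μhat b ⟨l - 1, by omega⟩ + c b ≤ μhat (ahat l) ⟨l - 1, by omega⟩ + c (ahat l)) ∧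
      Ahat l = (Ahat (l - 1)).filter fun a =>
        Chained (Ahat (l - 1)) (Linked μhat c ⟨l - 1, by omega⟩) a (ahat l))
    -- level `D` (`â^D` maximizes `u^D` over `Â^{D-1}`)
    (hlvlD : ahat D ∈ Ahat (D - 1) ∧
      ∀ b ∈ Ahat (D - 1),
        μhat b ⟨D - 1, by omega⟩ + c b ≤ μhat (ahat D) ⟨D - 1, by omega⟩ + c (ahat D))
    -- every arm of `Â^1` has small confidence radius
    (hsmall : ∀ b ∈ Ahat 1, c b ≤ ε / 2)
    -- the selected arm `â^D` lies in `𝒮_*^i`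
    (i : Fin D) (hsel : ahat D ∈ SStar A μ i) :
    μ astar i - μ (ahat D) i
      ≤ (μhat (ahat D) i + c (ahat D)) - (μhat (ahat D) i - c (ahat D)) + ε * (A - 1) := by
  have hiD : (i : ℕ) < D := i.2
  have hiD1 : (i : ℕ) ≤ D - 1 := by omega
  -- nesting of the Ahat sets
  have hsubstep : ∀ l : ℕ, 1 ≤ l → l ≤ D - 1 → Ahat l ⊆ Ahat (l - 1) := by
    intro l h1 h2
    rw [(hlvl l h1 h2).2.2]
    exact Finset.filter_subset _ _
  have hnest : ∀ m l : ℕ, m ≤ l → l ≤ D - 1 → Ahat l ⊆ Ahat m := by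
    intro m l hml
    induction l with
    | zero =>
      intro _
      have : m = 0 := Nat.le_zero.mp hml
      subst this; exact Finset.Subset.refl _
    | succ l ihl =>
      intro hlD
      rcases Nat.eq_or_lt_of_le hml with heq | hlt
      · subst heq; exact Finset.Subset.refl _
      · have h1 : Ahat (l + 1) ⊆ Ahat l := hsubstep (l + 1) (by omega) hlD
        exact Finset.Subset.trans h1 (ihl (by omega) (by omega))
  -- astar and ahat D agree on objectives strictly below i
  have hagree : ∀ n : ℕ, n < (i : ℕ) → ∀ (hn : n < D),
      μ astar ⟨n, hn⟩ = μ (ahat D) ⟨n, hn⟩ := by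
    intro n hni hn
    have hine : (i : ℕ) ≠ 0 := by omega
    rw [SStar, if_neg hine] at hsel
    have hsel' := Finset.mem_sdiff.mp hsel
    have hstar' : astar ∈ LexOptSet A μ ⟨(i : ℕ) - 1, by omega⟩ :=
      lexOptSet_anti μ (by simp [Fin.le_def]; omega) hstar
    exact lexOptSet_agree hstar' hsel'.1 n hn (by simp [Fin.le_def]; omega)
  -- astar remains in Ahat l for l ≤ i
  have hstar_mem : ∀ l : ℕ, l ≤ (i : ℕ) → astar ∈ Ahat l := by
    intro l
    induction l with
    | zero => intro _; rw [hA0]; exact Finset.mem_univ _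
    | succ l ihl =>
      intro hli
      have hst : astar ∈ Ahat l := ihl (by omega)
      have hl1D : l + 1 ≤ D - 1 := le_trans hli hiD1
      obtain ⟨hmem, hmax, hdef⟩ := hlvl (l + 1) (by omega) hl1D
      have hDm : ahat D ∈ Ahat (l + 1) := hnest (l + 1) (D - 1) hl1D le_rfl hlvlD.1
      rw [hdef] at hDm ⊢
      rw [Finset.mem_filter] at hDm ⊢
      refine ⟨hst, ?_⟩
      refine Relation.ReflTransGen.head ⟨hst, hDm.1, ?_⟩ hDm.2
      have hln : l < D := by omega
      obtain ⟨h1, h2⟩ := hcontain astar ⟨l, hln⟩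
      obtain ⟨h3, h4⟩ := hcontain (ahat D) ⟨l, hln⟩
      have he := hagree l (by omega) hln
      constructor <;> (simp only [Nat.add_sub_cancel]; linarith)
  have hA1 : ((A : ℝ) - 1) ≥ 0 := by
    have : (1 : ℝ) ≤ (A : ℝ) := by exact_mod_cast hA
    linarith
  rcases Nat.lt_or_ge (i : ℕ) (D - 1) with hcase | hcase
  · -- i + 1 ≤ D - 1 : use level i+1
    obtain ⟨hmem, hmax, hdef⟩ := hlvl ((i : ℕ) + 1) (by omega) (by omega)
    simp only [Nat.add_sub_cancel] at hmem hmax hdef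
    have hieta : (⟨(i : ℕ), by omega⟩ : Fin D) = i := rfl
    rw [hieta] at hmax hdef
    set B := ahat ((i : ℕ) + 1) with hB
    have hstari : astar ∈ Ahat (i : ℕ) := hstar_mem (i : ℕ) le_rfl
    have hmaxstar := hmax astar hstari
    have hDm : ahat D ∈ Ahat ((i : ℕ) + 1) := hnest ((i : ℕ) + 1) (D - 1) (by omega) le_rfl hlvlD.1
    have hDm' := hDm
    rw [hdef, Finset.mem_filter] at hDm'
    -- strengthen the chain to live inside Ahat (i+1)
    have hchain' : Relation.ReflTransGen
        (fun x y => x ∈ Ahat ((i : ℕ) + 1) ∧ y ∈ Ahat ((i : ℕ) + 1) ∧ Linked μhat c i x y)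
        (ahat D) B := by
      have hmemB : ∀ x : Fin A, x ∈ Ahat (i : ℕ) →
          Chained (Ahat (i : ℕ)) (Linked μhat c i) x B → x ∈ Ahat ((i : ℕ) + 1) := by
        intro x hx hcx
        rw [hdef, Finset.mem_filter]
        exact ⟨hx, hcx⟩
      refine Relation.ReflTransGen.head_induction_on hDm'.2 Relation.ReflTransGen.refl ?_
      intro x y hxy hyB ih
      refine Relation.ReflTransGen.head ⟨?_, ?_, hxy.2.2⟩ ih
      · exact hmemB x hxy.1 (Relation.ReflTransGen.head hxy hyB)
      · exact hmemB y hxy.2.1 hyB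
    -- small radii inside Ahat (i+1)
    have hsub1 : Ahat ((i : ℕ) + 1) ⊆ Ahat 1 := hnest 1 ((i : ℕ) + 1) (by omega) (by omega)
    -- apply the chained bound with g = upper confidence bound in objective i
    have hbound := chained_bound (S := Ahat ((i : ℕ) + 1))
      (g := fun x => μhat x i + c x) ε (le_of_lt hε)
      (fun x y hxy => by
        refine ⟨hxy.2.1, ?_⟩
        have hcy : c y ≤ ε / 2 := hsmall y (hsub1 hxy.2.1)
        have := hxy.2.2.2
        linarith)
      hDm (Relation.ReflTransGen.mono (fun x y h => h) _ _ hchain')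
    have hcardA : ((Ahat ((i : ℕ) + 1)).card : ℝ) ≤ (A : ℝ) := by
      have h1 := Finset.card_le_univ (Ahat ((i : ℕ) + 1))
      simp only [Finset.card_univ, Fintype.card_fin] at h1
      exact_mod_cast h1
    have hmul : ε * (((Ahat ((i : ℕ) + 1)).card : ℝ) - 1) ≤ ε * ((A : ℝ) - 1) :=
      mul_le_mul_of_nonneg_left (by linarith) (le_of_lt hε)
    obtain ⟨hu1, hu2⟩ := hcontain astar i
    obtain ⟨hu3, hu4⟩ := hcontain (ahat D) i
    linarith
  · -- i = D - 1 : use level D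
    have hieq : (i : ℕ) = D - 1 := le_antisymm hiD1 hcase
    have hstari : astar ∈ Ahat (D - 1) := hieq ▸ hstar_mem (i : ℕ) le_rfl
    have hmaxstar := hlvlD.2 astar hstari
    have hieta : (⟨D - 1, by omega⟩ : Fin D) = i := by
      apply Fin.ext; simp [hieq]
    rw [hieta] at hmaxstar
    obtain ⟨hu1, hu2⟩ := hcontain astar i
    obtain ⟨hu3, hu4⟩ := hcontain (ahat D) i
    have : 0 ≤ ε * ((A : ℝ) - 1) := mul_nonneg (le_of_lt hε) hA1
    linarith


end PFLexGap
end
end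

section
/- Let S be a finite set, c ≥ 0 a real number, and for each s ∈ S let l_s ≤ u_s be real numbers with u_s − l_s ≤ 2c. Suppose s, s′ ∈ S are chained within S, i.e., there is a finite sequence s = s_0, s_1, …, s_m = s′ of elements of S such that [l_{s_k}, u_{s_k}] ∩ [l_{s_{k+1}}, u_{s_{k+1}}] ≠ ∅ for every 0 ≤ k < m. Then |u_s − u_{s′}| ≤ 2·(|S| − 1)·c. -/
/-- **Chaining bound for overlapping intervals.**
Let `S` be a finite set, `c ≥ 0`, and for each `s ∈ S` let `[l s, u s]` be a nonempty
interval of length at most `2c`.  If `s, s' ∈ S` are chained within `S` (joined by a finite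
sequence of elements of `S` whose consecutive members have intersecting intervals), then
`|u s - u s'| ≤ 2·(|S| - 1)·c`. -/
theorem chained_upper_endpoints_diff_le {α : Type*} (S : Finset α) (c : ℝ) (hc : 0 ≤ c)
    (l u : α → ℝ) (hlu : ∀ s ∈ S, l s ≤ u s) (hlen : ∀ s ∈ S, u s - l s ≤ 2 * c)
    (s s' : α) (hs : s ∈ S) (hs' : s' ∈ S)
    (hchain : Relation.ReflTransGen
      (fun x y => x ∈ S ∧ y ∈ S ∧ l x ≤ u y ∧ l y ≤ u x) s s') :
    |u s - u s'| ≤ 2 * ((S.card : ℝ) - 1) * c := by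
  classical
  set V := {x // x ∈ S}
  let G : SimpleGraph V :=
    { Adj := fun x y => x ≠ y ∧ l x.1 ≤ u y.1 ∧ l y.1 ≤ u x.1
      symm := ⟨by rintro x y ⟨hne, h1, h2⟩; exact ⟨hne.symm, h2, h1⟩⟩
      loopless := ⟨by rintro x ⟨hne, -⟩; exact hne rfl⟩ }
  -- reachability in G
  have hreach : G.Reachable ⟨s, hs⟩ ⟨s', hs'⟩ := by
    induction hchain with
    | refl => exact SimpleGraph.Reachable.refl _
    | @tail b cc hab hbc ih =>
      obtain ⟨hbS, hcS, h1, h2⟩ := hbc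
      have ihr := ih hbS
      by_cases hbc' : b = cc
      · subst hbc'; exact ihr
      · exact ihr.trans (SimpleGraph.Adj.reachable
          (by exact ⟨fun h => hbc' (congrArg Subtype.val h), h1, h2⟩ :
            G.Adj ⟨b, hbS⟩ ⟨cc, hcS⟩))
  -- each edge moves u by at most 2c
  have edge_bound : ∀ x y : V, G.Adj x y → |u x.1 - u y.1| ≤ 2 * c := by
    rintro x y ⟨-, h1, h2⟩
    rw [abs_le]
    constructor
    · have := hlen y.1 y.2
      nlinarith
    · have := hlen x.1 x.2
      nlinarith
  -- along any walk, u changes by at most 2c per step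
  have walk_bound : ∀ (x y : V) (p : G.Walk x y),
      |u x.1 - u y.1| ≤ 2 * c * p.length := by
    intro x y p
    induction p with
    | nil => simp
    | @cons a b z ha q ih =>
      have h1 := edge_bound a b ha
      calc |u a.1 - u z.1| ≤ |u a.1 - u b.1| + |u b.1 - u z.1| := abs_sub_le _ _ _
        _ ≤ 2 * c + 2 * c * q.length := add_le_add h1 ih
        _ = 2 * c * (SimpleGraph.Walk.cons ha q).length := by
            simp [SimpleGraph.Walk.length_cons]; ring
  obtain ⟨w⟩ := hreach
  have hpath : w.toPath.1.IsPath := w.toPath.2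
  have hlen' : w.toPath.1.length < Fintype.card V := hpath.length_lt
  have hcard : Fintype.card V = S.card := Fintype.card_coe S
  have hle : (w.toPath.1.length : ℝ) ≤ (S.card : ℝ) - 1 := by
    have : w.toPath.1.length + 1 ≤ S.card := by omega
    have := (Nat.cast_le (α := ℝ)).2 this
    push_cast at this
    linarith
  calc |u s - u s'| ≤ 2 * c * w.toPath.1.length :=
        walk_bound ⟨s, hs⟩ ⟨s', hs'⟩ w.toPath.1
    _ ≤ 2 * c * ((S.card : ℝ) - 1) := by
        apply mul_le_mul_of_nonneg_left hle (by positivity)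
    _ = 2 * ((S.card : ℝ) - 1) * c := by ring
end

section
/- Let A, D ≥ 1 be integers, ε ∈ (0,1], and δ ∈ (0,1). If n ≥ 1 is an integer satisfying √( ((1+n)/n²)·(1 + 2·log( A·D·√(1+n) / δ )) ) > ε/2 (equivalently, n²/(n+1) < (4/ε²)·(1 + 2·log(A·D·√(1+n)/δ))), then n ≤ 3 + (16/ε²)·log( 2·√e·A·D / (ε·δ) ). -/
set_option maxHeartbeats 1000000


/-- **Counting inequality for the PF-LEX round bound (Lemma `round-bound`).**
If the confidence radius after `n ≥ 1` pulls,
`c(n) = √(((1+n)/n²)·(1 + 2 log(A·D·√(1+n)/δ)))`, still exceeds `ε/2`, then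
`n ≤ 3 + (16/ε²)·log(2·√e·A·D/(ε·δ))`. -/
theorem pulls_le_of_radius_gt (A D : ℕ) (hA : 1 ≤ A) (hD : 1 ≤ D)
    (ε δ : ℝ) (hε0 : 0 < ε) (hε1 : ε ≤ 1) (hδ0 : 0 < δ) (hδ1 : δ < 1)
    (n : ℕ) (hn : 1 ≤ n)
    (h : ε / 2 < Real.sqrt ((1 + n) / (n : ℝ) ^ 2
        * (1 + 2 * Real.log (A * D * Real.sqrt (1 + n) / δ)))) :
    (n : ℝ) ≤ 3 + 16 / ε ^ 2
        * Real.log (2 * Real.sqrt (Real.exp 1) * A * D / (ε * δ)) := by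
  have hA1 : (1:ℝ) ≤ A := by exact_mod_cast hA
  have hD1 : (1:ℝ) ≤ D := by exact_mod_cast hD
  have hn1 : (1:ℝ) ≤ n := by exact_mod_cast hn
  have hnp : (0:ℝ) < n := by linarith
  have h1n : (0:ℝ) < 1 + n := by linarith
  have hAD : (0:ℝ) < (A:ℝ) * D := by nlinarith
  -- decompose the log in the hypothesis
  have hLdecomp : Real.log ((A:ℝ) * D * Real.sqrt (1 + n) / δ)
      = (Real.log ((A:ℝ)*D) - Real.log δ) + Real.log (1 + (n:ℝ)) / 2 := by
    rw [div_eq_mul_inv, Real.log_mul (by positivity) (by positivity),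
        Real.log_mul (by positivity) (by positivity),
        Real.log_inv, Real.log_sqrt (by positivity)]
    ring
  set B : ℝ := Real.log ((A:ℝ)*D) - Real.log δ with hB
  have h2 : (ε/2)^2 < (1 + n) / (n : ℝ) ^ 2
      * (1 + 2 * ((B + Real.log (1 + (n:ℝ)) / 2))) := by
    have := (Real.lt_sqrt (by positivity)).mp h
    rwa [hLdecomp] at this
  have h3 : (ε/2)^2 * (n:ℝ)^2 < (1 + n) * (1 + 2*B + Real.log (1 + (n:ℝ))) := by
    rw [div_mul_eq_mul_div, lt_div_iff₀ (by positivity)] at h2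
    nlinarith [h2]
  have h4 : ε^2 * ((n:ℝ) - 1) / 4 < 1 + 2*B + Real.log (1 + (n:ℝ)) := by
    have hsq : ((n:ℝ) - 1) * (1 + n) ≤ (n:ℝ)^2 := by nlinarith
    nlinarith [h3, mul_pos h1n h1n]
  -- log bound: log(1+n) ≤ (1+n)ε²/8 - 1 + log(8/ε²)
  have hlog : Real.log (1 + (n:ℝ)) ≤ (1 + (n:ℝ)) * ε^2 / 8 - 1 + Real.log (8/ε^2) := by
    have hx : (0:ℝ) < (1 + (n:ℝ)) * (ε^2/8) := by positivity
    have h1 := Real.log_le_sub_one_of_pos hx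
    rw [Real.log_mul (by positivity) (by positivity)] at h1
    have h2' : Real.log (ε^2/8) = - Real.log (8/ε^2) := by
      rw [show (ε^2/8 : ℝ) = (8/ε^2)⁻¹ by field_simp, Real.log_inv]
    nlinarith [h1, h2']
  -- so ε²(n-3)/8 < 2B + log(8/ε²)
  have h5 : ε^2 * ((n:ℝ) - 3) / 8 < 2*B + Real.log (8/ε^2) := by nlinarith [h4, hlog]
  -- expand the target log
  have hR : Real.log (2 * Real.sqrt (Real.exp 1) * A * D / (ε * δ))
      = Real.log 2 + 1/2 + Real.log ((A:ℝ)*D) - Real.log ε - Real.log δ := by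
    rw [div_eq_mul_inv, Real.log_mul (by positivity) (by positivity),
        Real.log_mul (by positivity) (by positivity),
        Real.log_mul (by positivity) (by positivity),
        Real.log_mul (by positivity) (by positivity),
        Real.log_inv, Real.log_sqrt (le_of_lt (Real.exp_pos 1)), Real.log_exp]
    rw [Real.log_mul (show ((A:ℝ)) ≠ 0 by positivity) (show ((D:ℝ)) ≠ 0 by positivity),
        Real.log_mul (ne_of_gt hε0) (ne_of_gt hδ0)]
    ring
  have h8 : Real.log (8/ε^2) = 3 * Real.log 2 - 2 * Real.log ε := by
    rw [Real.log_div (by norm_num) (by positivity),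
        show (8:ℝ) = 2^3 by norm_num, Real.log_pow, Real.log_pow]
    push_cast; ring
  have hlog2 : Real.log 2 ≤ 1 := by nlinarith [Real.log_le_sub_one_of_pos (by norm_num : (0:ℝ) < 2)]
  -- combine
  set R : ℝ := Real.log (2 * Real.sqrt (Real.exp 1) * A * D / (ε * δ)) with hRdef
  have h6 : ε^2 * ((n:ℝ) - 3) ≤ 16 * R := by
    rw [hR]
    nlinarith [h5, h8, hlog2]
  have h7 : (n:ℝ) - 3 ≤ 16 / ε^2 * R := by
    rw [div_mul_eq_mul_div, le_div_iff₀ (by positivity)]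
    nlinarith [h6]
  linarith
end
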